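/- Return-time bound for the critical directed Erdős–Rényi random graph. For every i ∈ {1,…,N} and every integer k ≥ 1: P̃(τ^i ≤ k) ≤ ((k−1)/N)·exp(ϑ k / N). -/

import Mathlib

/-!
If information emitted by `i` returns to `i` within `k` steps, the closed walk contains a simple
cycle through `i` of some length `L ∈ [2, k]` (loop erasure; the graph has no self-loops). A given
simple cycle uses `L` distinct edges, so by independence it is present with probability `p_N ^ L`,
and there are at most `N ^ (L - 1)` of them through `i`. The union bound gives at most
`N ^ (L - 1) p_N ^ L = λ ^ L / N ≤ exp (ϑ k / N) / N` for each of the `k - 1` lengths.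
-/

open MeasureTheory ProbabilityTheory
open scoped ENNReal

/-- The sets `𝒱^n_{i→·}` of neurons reachable from `i` in `n` steps along the directed
graph `W`: `reach W i 1 = {j : W_{i→j} = 1}` and
`reach W i (n+1) = {j : ∃ k ∈ reach W i n, W_{k→j} = 1}` (with `reach W i 0 = {i}`). -/
def reach {N : ℕ} (W : Fin N → Fin N → Bool) (i : Fin N) : ℕ → Finset (Fin N)
  | 0 => {i}
  | n + 1 => Finset.univ.filter (fun j => ∃ k ∈ reach W i n, W k j = true)

open Function Set

section Walks

variable {α : Type*} (r : α → α → Prop)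

def IsWalk (w : ℕ → α) (n : ℕ) : Prop := ∀ t < n, r (w t) (w (t + 1))

variable {r}

lemma IsWalk.snoc {w : ℕ → α} {n : ℕ} (hw : IsWalk r w n) {x : α} (hx : r (w n) x) :
    IsWalk r (fun t => if t ≤ n then w t else x) (n + 1) := by
  intro t ht
  rcases Nat.lt_or_eq_of_le (Nat.le_of_lt_succ ht) with h | rfl
  · simpa [h.le, Nat.succ_le_of_lt h] using hw t h
  · simpa using hx

lemma IsWalk.shortcut {w : ℕ → α} {n a b : ℕ} (hw : IsWalk r w n) (hab : a < b)
    (hbn : b ≤ n) (hloop : w a = w b) :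
    IsWalk r (fun t => if t ≤ a then w t else w (t + (b - a))) (n - (b - a)) := by
  intro t ht
  rcases lt_trichotomy t a with h | rfl | h
  · simpa [h.le, Nat.succ_le_of_lt h] using hw t (by omega)
  · have : t + 1 + (b - t) = b + 1 := by omega
    simpa [this, hloop] using hw b (by omega)
  · have : t + 1 + (b - a) = t + (b - a) + 1 := by omega
    simpa [not_le.2 h, show ¬ t + 1 ≤ a by omega, this] using hw (t + (b - a)) (by omega)

-- A cycle of length `m + 2` is encoded as an injective `c : Fin (m + 2) → α`; the closing edge
-- `c (Fin.last _) → c 0` comes from the wrap-around addition of `Fin`.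
lemma IsWalk.exists_cycle_of_injOn {w : ℕ → α} {m : ℕ} (hw : IsWalk r w (m + 2))
    (hinj : InjOn w (Iio (m + 2))) (hclosed : w (m + 2) = w 0) :
    ∃ c : Fin (m + 2) → α, c 0 = w 0 ∧ Injective c ∧ ∀ t, r (c t) (c (t + 1)) := by
  refine ⟨fun t => w t, rfl, fun s t hst => Fin.ext (hinj s.isLt t.isLt hst), fun t => ?_⟩
  have := hw t t.isLt
  show r (w t) (w ↑(t + 1))
  rw [Fin.val_add_one]
  split_ifs with h
  · subst h; simpa [hclosed] using this
  · simpa using this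

lemma IsWalk.exists_cycle_of_closed (hr : ∀ x, ¬ r x x) {w : ℕ → α} {n : ℕ}
    (hw : IsWalk r w n) (hn : 1 ≤ n) (hclosed : w n = w 0) :
    ∃ m, m + 2 ≤ n ∧ ∃ c : Fin (m + 2) → α, c 0 = w 0 ∧ Injective c ∧
      ∀ t, r (c t) (c (t + 1)) := by
  induction n using Nat.strong_induction_on generalizing w with
  | _ n ih =>
  by_cases hinj : InjOn w (Iio n)
  · obtain ⟨m, rfl⟩ : ∃ m, n = m + 2 := by
      refine ⟨n - 2, ?_⟩
      by_contra h
      obtain rfl : n = 1 := by omega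
      exact hr _ (hclosed ▸ hw 0 one_pos)
    exact ⟨m, le_rfl, hw.exists_cycle_of_injOn hinj hclosed⟩
  · obtain ⟨a, b, hb, hab, hloop⟩ : ∃ a b, b < n ∧ a < b ∧ w a = w b := by
      simp only [InjOn, mem_Iio, not_forall] at hinj
      obtain ⟨a, ha, b, hb, hloop, hne⟩ := hinj
      rcases Nat.lt_or_gt_of_ne hne with h | h
      · exact ⟨a, b, hb, h, hloop⟩
      · exact ⟨b, a, ha, h, hloop.symm⟩
    have hclosed' : (fun t => if t ≤ a then w t else w (t + (b - a))) (n - (b - a)) = w 0 := by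
      simp [show ¬ n - (b - a) ≤ a by omega, show n - (b - a) + (b - a) = n by omega, hclosed]
    obtain ⟨m, hm, hcyc⟩ :=
      ih (n - (b - a)) (by omega) (hw.shortcut hab hb.le hloop) (by omega) hclosed'
    exact ⟨m, by omega, by simpa using hcyc⟩

end Walks

lemma exists_walk_of_mem_reach {N : ℕ} {W : Fin N → Fin N → Bool} {i j : Fin N} {n : ℕ}
    (hj : j ∈ reach W i n) :
    ∃ w : ℕ → Fin N, w 0 = i ∧ w n = j ∧ IsWalk (fun a b => W a b = true) w n := by
  induction n generalizing j with
  | zero =>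
    exact ⟨fun _ => i, rfl, (Finset.mem_singleton.1 hj).symm, fun t ht => absurd ht (by omega)⟩
  | succ n ih =>
    obtain ⟨k, hk, hkj⟩ := (Finset.mem_filter.1 hj).2
    obtain ⟨w, hw0, hwn, hw⟩ := ih hk
    exact ⟨_, by simp [hw0], by simp, hw.snoc (hwn ▸ hkj)⟩

lemma exists_cycle_of_mem_reach {N : ℕ} (W : Fin N → Fin N → Bool) (hW : ∀ j, W j j = false)
    {i : Fin N} {n : ℕ} (hn : 1 ≤ n) (h : i ∈ reach W i n) :
    ∃ m, m + 2 ≤ n ∧ ∃ c : Fin (m + 2) → Fin N, c 0 = i ∧ Injective c ∧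
      ∀ t, W (c t) (c (t + 1)) = true := by
  obtain ⟨w, hw0, hwn, hw⟩ := exists_walk_of_mem_reach h
  simpa [hw0] using hw.exists_cycle_of_closed (fun j => by simp [hW]) hn (hwn.trans hw0.symm)

lemma card_filter_apply_zero_eq {α : Type*} [Fintype α] [DecidableEq α] (m : ℕ) (x : α) :
    (Finset.univ.filter fun c : Fin (m + 1) → α => c 0 = x).card = Fintype.card α ^ m := by
  have : (Finset.univ.filter fun c : Fin (m + 1) → α => c 0 = x) =
      Finset.univ.image (Fin.cons (α := fun _ => α) x) := by
    ext c
    simp only [Finset.mem_filter, Finset.mem_univ, true_and, Finset.mem_image]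
    exact ⟨fun h => ⟨Fin.tail c, h ▸ Fin.cons_self_tail c⟩, fun ⟨d, hd⟩ => hd ▸ rfl⟩
  rw [this, Finset.card_image_of_injective _ (Fin.cons_right_injective (α := fun _ => α) x)]
  simp

lemma ProbabilityTheory.iIndepFun.measure_iInter_eq_pow {Ω ι κ : Type*} [MeasurableSpace Ω]
    {μ : Measure Ω} [Fintype κ] {X : ι → Ω → Bool} (hX : iIndepFun X μ) {q : ℝ≥0∞}
    (hq : ∀ j, μ {ω | X j ω = true} = q) {e : κ → ι} (he : Injective e) :
    μ (⋂ t, {ω | X (e t) ω = true}) = q ^ Fintype.card κ := by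
  rw [(hX.precomp he).meas_iInter (s := fun t => {ω | X (e t) ω = true})
    fun t => ⟨{true}, trivial, rfl⟩]
  simp [hq]

section Cycles

variable {V Ω : Type*}

def cyclesThrough [Fintype V] [DecidableEq V] (x : V) (m : ℕ) : Finset (Fin (m + 2) → V) :=
  (Finset.univ.filter fun c => c 0 = x).filter Injective

def cycleEvent (W : Ω → V → V → Bool) {m : ℕ} (c : Fin (m + 2) → V) : Set Ω :=
  {ω | ∀ t, W ω (c t) (c (t + 1)) = true}

lemma mem_cyclesThrough [Fintype V] [DecidableEq V] {x : V} {m : ℕ} {c : Fin (m + 2) → V} :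
    c ∈ cyclesThrough x m ↔ c 0 = x ∧ Injective c := by
  simp [cyclesThrough]

lemma card_cyclesThrough_le [Fintype V] [DecidableEq V] (x : V) (m : ℕ) :
    (cyclesThrough x m).card ≤ Fintype.card V ^ (m + 1) :=
  (Finset.card_filter_le _ _).trans_eq (card_filter_apply_zero_eq (m + 1) x)

variable [MeasurableSpace Ω] {μ : Measure Ω} {W : Ω → V → V → Bool} {q : ℝ≥0∞}

lemma measure_cycleEvent_eq_pow
    (hindep : iIndepFun (fun (p : {p : V × V // p.1 ≠ p.2}) ω => W ω p.1.1 p.1.2) μ)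
    (hq : ∀ i j, i ≠ j → μ {ω | W ω i j = true} = q) {m : ℕ} {c : Fin (m + 2) → V}
    (hc : Injective c) :
    μ (cycleEvent W c) = q ^ (m + 2) := by
  have hedge : ∀ t : Fin (m + 2), c t ≠ c (t + 1) := fun t h => by simpa using hc h
  have he : Injective fun t => (⟨(c t, c (t + 1)), hedge t⟩ : {p : V × V // p.1 ≠ p.2}) :=
    fun s t hst => hc (congrArg (fun p => p.1.1) hst)
  rw [cycleEvent, ofPred_forall, hindep.measure_iInter_eq_pow (fun p => hq _ _ p.2) he,
    Fintype.card_fin]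

lemma measure_biUnion_cycleEvent_le [Fintype V] [DecidableEq V]
    (hindep : iIndepFun (fun (p : {p : V × V // p.1 ≠ p.2}) ω => W ω p.1.1 p.1.2) μ)
    (hq : ∀ i j, i ≠ j → μ {ω | W ω i j = true} = q) (x : V) (m : ℕ) :
    μ (⋃ c ∈ cyclesThrough x m, cycleEvent W c) ≤ Fintype.card V ^ (m + 1) * q ^ (m + 2) :=
  calc μ (⋃ c ∈ cyclesThrough x m, cycleEvent W c)
      ≤ ∑ c ∈ cyclesThrough x m, μ (cycleEvent W c) := measure_biUnion_finset_le _ _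
    _ = (cyclesThrough x m).card * q ^ (m + 2) := by
      rw [Finset.sum_congr rfl fun c hc =>
        measure_cycleEvent_eq_pow hindep hq (mem_cyclesThrough.1 hc).2, Finset.sum_const,
        nsmul_eq_mul]
    _ ≤ Fintype.card V ^ (m + 1) * q ^ (m + 2) := by
      gcongr
      exact_mod_cast card_cyclesThrough_le x m

end Cycles

lemma one_add_pow_le_exp_mul {x : ℝ} (hx : 0 ≤ x) {L k : ℕ} (hLk : L ≤ k) :
    (1 + x) ^ L ≤ Real.exp (x * k) :=
  calc (1 + x) ^ L ≤ (1 + x) ^ k := pow_le_pow_right₀ (by linarith) hLk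
    _ ≤ Real.exp x ^ k := by gcongr; linarith [Real.add_one_le_exp x]
    _ = Real.exp (x * k) := by rw [← Real.exp_nat_mul, mul_comm]

lemma pow_mul_div_pow_succ (a b : ℝ) (n : ℕ) : b ^ n * (a / b) ^ (n + 1) = a ^ (n + 1) / b := by
  rcases eq_or_ne b 0 with rfl | hb
  · simp
  · rw [div_pow, pow_succ' b, mul_div_assoc', mul_comm, mul_div_mul_right _ _ (pow_ne_zero n hb)]

lemma natCast_pow_mul_pow_le_exp_div (N : ℕ) {ϑ : ℝ} (hϑ : 0 ≤ ϑ) {m k : ℕ}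
    (hmk : m + 2 ≤ k) :
    (N : ℝ) ^ (m + 1) * ((1 + ϑ / N) / N) ^ (m + 2) ≤ Real.exp (ϑ * k / N) / N := by
  rw [pow_mul_div_pow_succ, mul_div_right_comm]
  gcongr
  exact one_add_pow_le_exp_mul (by positivity) hmk

-- At `k = 0` both sides are `0`: truncated subtraction on the left, `ofReal` of `-1` on the right.
lemma ENNReal.natCast_sub_one (k : ℕ) :
    ((k - 1 : ℕ) : ℝ≥0∞) = ENNReal.ofReal ((k : ℝ) - 1) := by
  rcases k with _ | k
  · simp
  · rw [Nat.add_sub_cancel, Nat.cast_succ, add_sub_cancel_right, ENNReal.ofReal_natCast]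

theorem return_time_bound_general
    {Ωt : Type*} [MeasurableSpace Ωt] (Pt : Measure Ωt)
    (N : ℕ) (ϑ : ℝ) (hϑ : 0 < ϑ)
    (W : Ωt → Fin N → Fin N → Bool)
    (hdiag : ∀ ω j, W ω j j = false)
    (hber : ∀ i j : Fin N, i ≠ j →
      Pt {ω | W ω i j = true} = ENNReal.ofReal ((1 + ϑ / N) / N))
    (hindep : iIndepFun (m := fun _ : {p : Fin N × Fin N // p.1 ≠ p.2} =>
        (inferInstance : MeasurableSpace Bool))
      (fun p ω => W ω p.1.1 p.1.2) Pt)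
    (i : Fin N) (k : ℕ) :
    Pt {ω | ∃ n : ℕ, 1 ≤ n ∧ n ≤ k ∧ i ∈ reach (W ω) i n}
      ≤ ENNReal.ofReal (((k : ℝ) - 1) / N * Real.exp (ϑ * k / N)) := by
  have hcover : {ω | ∃ n : ℕ, 1 ≤ n ∧ n ≤ k ∧ i ∈ reach (W ω) i n} ⊆
      ⋃ m ∈ Finset.range (k - 1), ⋃ c ∈ cyclesThrough i m, cycleEvent W c := by
    rintro ω ⟨n, hn, hnk, hreach⟩
    obtain ⟨m, hmn, c, hc0, hc, hcW⟩ := exists_cycle_of_mem_reach (W ω) (hdiag ω) hn hreach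
    simp only [mem_iUnion, Finset.mem_range]
    exact ⟨m, by omega, c, mem_cyclesThrough.2 ⟨hc0, hc⟩, hcW⟩
  have hlength : ∀ m ∈ Finset.range (k - 1),
      Pt (⋃ c ∈ cyclesThrough i m, cycleEvent W c) ≤
        ENNReal.ofReal (Real.exp (ϑ * k / N) / N) := by
    intro m hm
    have hp : 0 ≤ (1 + ϑ / N) / N := by positivity
    calc _ ≤ (Fintype.card (Fin N) : ℝ≥0∞) ^ (m + 1) *
            ENNReal.ofReal ((1 + ϑ / N) / N) ^ (m + 2) :=
          measure_biUnion_cycleEvent_le hindep hber i m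
      _ = ENNReal.ofReal ((N : ℝ) ^ (m + 1) * ((1 + ϑ / N) / N) ^ (m + 2)) := by
          rw [ENNReal.ofReal_mul (by positivity), ENNReal.ofReal_pow hp,
            ENNReal.ofReal_pow (Nat.cast_nonneg N), ENNReal.ofReal_natCast, Fintype.card_fin]
      _ ≤ _ := ENNReal.ofReal_le_ofReal <|
          natCast_pow_mul_pow_le_exp_div N hϑ.le (by rw [Finset.mem_range] at hm; omega)
  calc Pt {ω | ∃ n : ℕ, 1 ≤ n ∧ n ≤ k ∧ i ∈ reach (W ω) i n}
      ≤ ∑ m ∈ Finset.range (k - 1), Pt (⋃ c ∈ cyclesThrough i m, cycleEvent W c) :=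
        (measure_mono hcover).trans (measure_biUnion_finset_le _ _)
    _ ≤ (k - 1 : ℕ) * ENNReal.ofReal (Real.exp (ϑ * k / N) / N) := by
        simpa using Finset.sum_le_sum hlength
    _ = ENNReal.ofReal (((k : ℝ) - 1) / N * Real.exp (ϑ * k / N)) := by
        rw [ENNReal.natCast_sub_one, ← ENNReal.ofReal_mul' (by positivity)]
        congr 1
        ring

/-- **Return-time bound for the critical directed Erdős–Rényi random graph.**
If `(W_{i→j})_{i≠j}` are i.i.d. Bernoulli(`p_N`) with `p_N = λ/N`, `λ = 1 + ϑ/N`,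
then for every `i` and every `k ≥ 1`,
`P̃(τ^i ≤ k) ≤ ((k-1)/N) exp(ϑ k / N)`, where `τ^i = inf{n ≥ 1 : i ∈ 𝒱^n_{i→·}}`. -/
theorem return_time_bound
    {Ωt : Type*} [MeasurableSpace Ωt] (Pt : Measure Ωt) [IsProbabilityMeasure Pt]
    (N : ℕ) (hN : 0 < N) (ϑ : ℝ) (hϑ : 0 < ϑ)
    (W : Ωt → Fin N → Fin N → Bool)
    (hmeas : ∀ p : Fin N × Fin N, Measurable (fun ω => W ω p.1 p.2))
    (hdiag : ∀ ω j, W ω j j = false)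
    (hber : ∀ i j : Fin N, i ≠ j →
      Pt {ω | W ω i j = true} = ENNReal.ofReal ((1 + ϑ / N) / N))
    (hindep : iIndepFun (m := fun _ : {p : Fin N × Fin N // p.1 ≠ p.2} =>
        (inferInstance : MeasurableSpace Bool))
      (fun p ω => W ω p.1.1 p.1.2) Pt)
    (i : Fin N) (k : ℕ) (hk : 1 ≤ k) :
    Pt {ω | ∃ n : ℕ, 1 ≤ n ∧ n ≤ k ∧ i ∈ reach (W ω) i n}
      ≤ ENNReal.ofReal (((k : ℝ) - 1) / N * Real.exp (ϑ * k / N)) :=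
  return_time_bound_general Pt N ϑ hϑ W hdiag hber hindep i k
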